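/- arXiv:2407.16969 — 6 statements merged into one kernel-verified Lean document; each statement's English description precedes it below -/
import Mathlib

section
/- Let δ ≥ 0, T_D, T_Z be real numbers and let T_S = T_D + T_Z + 2δ. Let τ₁₁ᵐⁱⁿ ≤ τ₁₁ᵐᵃˣ, τ₂₁ᵐⁱⁿ ≤ τ₂₁ᵐᵃˣ, τ₂₂ᵐⁱⁿ ≤ τ₂₂ᵐᵃˣ, τ₁₂ᵐⁱⁿ ≤ τ₁₂ᵐᵃˣ be real numbers such that the absolute difference between any two of these eight delay parameters is at most τ_max ≥ 0. If T_D > τ_max and T_Z > 2δ + τ_max, then for every integer m the candidate-interval lengths are strictly positive: χ_{U,1}^m − χ_{L,1}^m > 0 and χ_{U,2}^m − χ_{L,2}^m > 0, where χ_{U,1}^m = min{(m+1)T_S + τ₁₁ᵐⁱⁿ − δ, (m+1)T_S − δ + τ₂₁ᵐᵃˣ}, χ_{L,1}^m = max{(m+1)T_S − T_Z + τ₁₁ᵐᵃˣ + δ, mT_S + T_Z + δ + τ₂₁ᵐⁱⁿ}, χ_{U,2}^m = min{mT_S + T_Z + τ₂₂ᵐⁱⁿ − δ, mT_S + δ + T_D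 + τ₁₂ᵐᵃˣ}, and χ_{L,2}^m = max{mT_S + τ₂₂ᵐᵃˣ + δ, mT_S + δ + τ₁₂ᵐⁱⁿ}. -/
/-!
After cancelling the common offset `m T_S` (and using `T_S - T_Z - 2δ = T_D`), each of the
eight comparisons between an upper and a lower endpoint says that `T_D` or `T_Z - 2δ` exceeds
the difference of two delays, which is at most `τ_max`.
-/

theorem min_sub_max_pos {α : Type*} [AddCommGroup α] [LinearOrder α] [IsOrderedAddMonoid α]
    {a b c d : α} (hca : c < a) (hcb : c < b) (hda : d < a) (hdb : d < b) :
    min a b - max c d > 0 :=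
  sub_pos.mpr (max_lt (lt_min hca hcb) (lt_min hda hdb))

theorem candidate_intervals_positive_general
    (δ TD TZ TS τmax : ℝ)
    (τ11min τ11max τ21min τ21max τ22min τ22max τ12min τ12max : ℝ)
    (hTS : TS = TD + TZ + 2 * δ)
    (hpair : ∀ x y : ℝ,
      x ∈ ([τ11min, τ11max, τ21min, τ21max, τ22min, τ22max, τ12min, τ12max] : List ℝ) →
      y ∈ ([τ11min, τ11max, τ21min, τ21max, τ22min, τ22max, τ12min, τ12max] : List ℝ) →
      |x - y| ≤ τmax)
    (hTD : TD > τmax) (hTZ : TZ > 2 * δ + τmax) :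
    ∀ m : ℤ,
      (min ((m + 1) * TS + τ11min - δ) ((m + 1) * TS - δ + τ21max) -
        max ((m + 1) * TS - TZ + τ11max + δ) (m * TS + TZ + δ + τ21min) > 0) ∧
      (min (m * TS + TZ + τ22min - δ) (m * TS + δ + TD + τ12max) -
        max (m * TS + τ22max + δ) (m * TS + δ + τ12min) > 0) := by
  intro m
  have spread : ∀ x y, x ∈ [τ11min, τ11max, τ21min, τ21max, τ22min, τ22max, τ12min, τ12max] →
      y ∈ [τ11min, τ11max, τ21min, τ21max, τ22min, τ22max, τ12min, τ12max] → x - y ≤ τmax :=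
    fun x y hx hy => (le_abs_self _).trans (hpair x y hx hy)
  subst hTS
  exact ⟨min_sub_max_pos
      (by linarith [spread τ11max τ11min (by simp) (by simp)])
      (by linarith [spread τ11max τ21max (by simp) (by simp)])
      (by linarith [spread τ21min τ11min (by simp) (by simp)])
      (by linarith [spread τ21min τ21max (by simp) (by simp)]),
    min_sub_max_pos
      (by linarith [spread τ22max τ22min (by simp) (by simp)])
      (by linarith [spread τ22max τ12max (by simp) (by simp)])
      (by linarith [spread τ12min τ22min (by simp) (by simp)])
      (by linarith [spread τ12min τ12max (by simp) (by simp)])⟩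

/-- Theorem 1 of the paper: if `T_D > τ_max` and `T_Z > 2δ + τ_max`, then every
candidate interval has strictly positive length. -/
theorem candidate_intervals_positive
    (δ TD TZ TS τmax : ℝ)
    (τ11min τ11max τ21min τ21max τ22min τ22max τ12min τ12max : ℝ)
    (hδ : 0 ≤ δ) (hτmax : 0 ≤ τmax)
    (hTS : TS = TD + TZ + 2 * δ)
    (h11 : τ11min ≤ τ11max) (h21 : τ21min ≤ τ21max)
    (h22 : τ22min ≤ τ22max) (h12 : τ12min ≤ τ12max)
    (hpair : ∀ x y : ℝ,
      x ∈ ([τ11min, τ11max, τ21min, τ21max, τ22min, τ22max, τ12min, τ12max] : List ℝ) →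
      y ∈ ([τ11min, τ11max, τ21min, τ21max, τ22min, τ22max, τ12min, τ12max] : List ℝ) →
      |x - y| ≤ τmax)
    (hTD : TD > τmax) (hTZ : TZ > 2 * δ + τmax) :
    ∀ m : ℤ,
      (min ((m + 1) * TS + τ11min - δ) ((m + 1) * TS - δ + τ21max) -
        max ((m + 1) * TS - TZ + τ11max + δ) (m * TS + TZ + δ + τ21min) > 0) ∧
      (min (m * TS + TZ + τ22min - δ) (m * TS + δ + TD + τ12max) -
        max (m * TS + τ22max + δ) (m * TS + δ + τ12min) > 0) :=
  candidate_intervals_positive_general δ TD TZ TS τmax τ11min τ11max τ21min τ21max τ22min τ22max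
    τ12min τ12max hTS hpair hTD hTZ
end

section
/- Let N ≥ 1, let Δf > 0 and f_c be real numbers, and set f_n = f_c + nΔf for n ∈ {−N+1, …, N}. Let G ≥ 2N and let t₁, …, t_G be pairwise distinct real numbers satisfying max_v t_v − min_v t_v < 1/Δf. Then the G × 2N complex matrix V with entries V[v, n] = exp(2πi f_n t_v) has rank 2N. -/
open Complex Matrix

/-- Appendix B of the paper: the sampling matrix, built from `G` pairwise
distinct sampling times lying in an interval shorter than `1/Δf`, has full
column rank `2N`. -/
theorem sampling_matrix_rank
    (N G : ℕ) (hN : 1 ≤ N) (Δf fc : ℝ) (hΔf : 0 < Δf)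
    (hG : 2 * N ≤ G)
    (t : Fin G → ℝ) (ht : Function.Injective t)
    (hspread : ∀ v w : Fin G, t v - t w < 1 / Δf) :
    Matrix.rank (Matrix.of fun (v : Fin G) (n : Fin (2 * N)) =>
      Complex.exp (2 * Real.pi * Complex.I *
        ((fc + (((n : ℕ) : ℝ) + 1 - (N : ℝ)) * Δf : ℝ) : ℂ) * ((t v : ℝ) : ℂ)))
      = 2 * N := by
  classical
  set z : Fin G → ℂ := fun v => Complex.exp (2 * Real.pi * Complex.I * Δf * (t v : ℂ)) with hz_def
  set c : Fin G → ℂ := fun v =>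
    Complex.exp (2 * Real.pi * Complex.I * ((fc : ℂ) + (1 - (N : ℂ)) * Δf) * (t v : ℂ)) with hc_def
  -- entrywise factorization
  have hfac : ∀ (v : Fin G) (n : Fin (2 * N)),
      Complex.exp (2 * Real.pi * Complex.I *
        ((fc + (((n : ℕ) : ℝ) + 1 - (N : ℝ)) * Δf : ℝ) : ℂ) * ((t v : ℝ) : ℂ))
      = c v * z v ^ (n : ℕ) := by
    intro v n
    rw [hc_def, hz_def, ← Complex.exp_nat_mul, ← Complex.exp_add]
    congr 1
    push_cast
    ring
  -- injectivity of z
  have hzinj : Function.Injective z := by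
    intro v w hvw
    have h2pi : (2 * Real.pi * Complex.I : ℂ) ≠ 0 := by
      simp [Real.pi_ne_zero, Complex.I_ne_zero]
    rw [hz_def, Complex.exp_eq_exp_iff_exists_int] at hvw
    obtain ⟨k, hk⟩ := hvw
    have hk' : ((Δf * (t v - t w) : ℝ) : ℂ) = (k : ℂ) := by
      apply mul_left_cancel₀ h2pi
      push_cast
      push_cast at hk
      linear_combination hk
    have hkr : Δf * (t v - t w) = (k : ℝ) := by exact_mod_cast hk'
    have h1 : Δf * (t v - t w) < 1 := by
      have := hspread v w
      calc Δf * (t v - t w) < Δf * (1 / Δf) := by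
            exact mul_lt_mul_of_pos_left this hΔf
        _ = 1 := by field_simp
    have h2 : -(Δf * (t v - t w)) < 1 := by
      have := hspread w v
      have : Δf * (t w - t v) < 1 := by
        calc Δf * (t w - t v) < Δf * (1 / Δf) := mul_lt_mul_of_pos_left this hΔf
          _ = 1 := by field_simp
      linarith
    have hk0 : k = 0 := by
      rw [hkr] at h1 h2
      have hk1 : k < 1 := by exact_mod_cast h1
      have hk2 : (-1 : ℤ) < k := by
        have : (-1 : ℝ) < (k : ℝ) := by linarith
        exact_mod_cast this
      omega
    have : t v = t w := by
      rw [hk0] at hkr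
      simp at hkr
      rcases hkr with h | h
      · exact absurd h (ne_of_gt hΔf)
      · linarith
    exact ht this
  have hcne : ∀ v, c v ≠ 0 := fun v => Complex.exp_ne_zero _
  -- the transpose rows are linearly independent
  set A : Matrix (Fin G) (Fin (2 * N)) ℂ := Matrix.of fun v n =>
      Complex.exp (2 * Real.pi * Complex.I *
        ((fc + (((n : ℕ) : ℝ) + 1 - (N : ℝ)) * Δf : ℝ) : ℂ) * ((t v : ℝ) : ℂ)) with hA_def
  have hli : LinearIndependent ℂ (Aᵀ : Matrix (Fin (2 * N)) (Fin G) ℂ).row := by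
    rw [Fintype.linearIndependent_iff]
    intro g hg n
    -- build polynomial
    set p : Polynomial ℂ := ∑ m : Fin (2 * N), Polynomial.C (g m) * Polynomial.X ^ (m : ℕ)
      with hp_def
    have hpz : p = 0 := by
      have hNpos : 0 < 2 * N := by omega
      refine Polynomial.eq_zero_of_natDegree_lt_card_of_eval_eq_zero p
        (f := fun w : Fin (2 * N) => z (Fin.castLE hG w))
        (fun a b hab => Fin.castLE_injective hG (hzinj hab)) ?_ ?_
      · intro w
        set v : Fin G := Fin.castLE hG w
        have hv := congrFun hg v
        simp only [Finset.sum_apply, Pi.smul_apply, Matrix.row_apply, Matrix.transpose_apply, Pi.zero_apply,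
          smul_eq_mul] at hv
        have hv' : ∑ m : Fin (2 * N), g m * (c v * z v ^ (m : ℕ)) = 0 := by
          rw [← hv]
          refine Finset.sum_congr rfl fun m _ => ?_
          rw [hA_def]
          simp only [Matrix.of_apply]
          rw [hfac v m]
        have hv'' : c v * ∑ m : Fin (2 * N), g m * z v ^ (m : ℕ) = 0 := by
          rw [Finset.mul_sum]
          rw [← hv']
          exact Finset.sum_congr rfl fun m _ => by ring
        have := (mul_eq_zero.mp hv'').resolve_left (hcne v)
        rw [hp_def]
        simp only [Polynomial.eval_finset_sum, Polynomial.eval_mul, Polynomial.eval_C,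
          Polynomial.eval_pow, Polynomial.eval_X]
        exact this
      · rw [Fintype.card_fin]
        calc p.natDegree ≤ 2 * N - 1 := by
              rw [hp_def]
              refine Polynomial.natDegree_sum_le_of_forall_le _ _ fun m _ => ?_
              refine (Polynomial.natDegree_C_mul_le _ _).trans ?_
              rw [Polynomial.natDegree_X_pow]
              omega
          _ < 2 * N := by omega
    have : g n = p.coeff (n : ℕ) := by
      rw [hp_def, Polynomial.finset_sum_coeff]
      rw [Finset.sum_eq_single n]
      · simp
      · intro m _ hmn
        simp only [Polynomial.coeff_C_mul, Polynomial.coeff_X_pow]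
        rw [if_neg (fun h => hmn (Fin.ext h.symm))]
        ring
      · simp
    rw [this, hpz]
    simp
  rw [← Matrix.rank_transpose]
  have := hli.rank_matrix
  rw [this, Fintype.card_fin]
end

section
/- Let N ≥ 1, let Δf > 0 and f_c be real numbers, and set f_n = f_c + nΔf for n ∈ {−N+1, …, N}. Let G ≥ 2N and let t₁, …, t_G be pairwise distinct real numbers satisfying max_v t_v − min_v t_v < 1/Δf. Let V be the G × 2N complex matrix with entries V[v, n] = exp(2πi f_n t_v), and let H be the 2N × 2N diagonal complex matrix with diagonal entries H^{−N+1}, …, H^{N}, all nonzero. Then rank(V · H) = 2N. -/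
/-!
Writing `z_v = exp(2πi Δf t_v)`, the entries of the sampling matrix factor as
`V[v, n] = c_v z_v ^ n` with `c_v ≠ 0`, so every `2N` rows of `V` form a row-scaled Vandermonde
matrix. Since the sampling times spread over less than `1/Δf`, the phases `Δf t_v` differ by less
than one full turn, the nodes `z_v` are distinct, and that Vandermonde determinant is nonzero.
Multiplying by the invertible diagonal matrix `H` does not change the rank.
-/

open Complex

theorem Complex.eq_of_exp_two_pi_mul_I_mul_eq {x y : ℝ} (hxy : |x - y| < 1)
    (h : exp (2 * Real.pi * I * x) = exp (2 * Real.pi * I * y)) : x = y := by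
  obtain ⟨k, hk⟩ := exp_eq_exp_iff_exists_int.mp h
  have hk' : x = y + k := by
    have h2πI : 2 * (Real.pi : ℂ) * I ≠ 0 := by simp [Real.pi_ne_zero, I_ne_zero]
    have : (x : ℂ) = y + k := mul_left_cancel₀ h2πI (by linear_combination hk)
    exact_mod_cast this
  have hk0 : k = 0 := by
    have : |(k : ℝ)| < 1 := by rwa [hk', add_sub_cancel_left] at hxy
    exact Int.abs_lt_one_iff.mp (by exact_mod_cast this)
  simpa [hk0] using hk'

theorem Matrix.rank_of_mul_pow {K ι : Type*} [Field K] [Fintype ι] {n : ℕ}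
    (hn : n ≤ Fintype.card ι) (c z : ι → K) (hc : ∀ v, c v ≠ 0) (hz : Function.Injective z) :
    (Matrix.of fun v (k : Fin n) => c v * z v ^ (k : ℕ)).rank = n := by
  set A : Matrix ι (Fin n) K := Matrix.of fun v k => c v * z v ^ (k : ℕ)
  refine le_antisymm ((rank_le_card_width A).trans_eq (Fintype.card_fin n)) ?_
  obtain ⟨e⟩ : Nonempty (Fin n ↪ ι) :=
    Function.Embedding.nonempty_of_card_le (by rwa [Fintype.card_fin])
  have hsub : A.submatrix e id = diagonal (c ∘ e) * vandermonde (z ∘ e) := by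
    ext i k
    simp [A, diagonal_mul]
  have hdet : (diagonal (c ∘ e) * vandermonde (z ∘ e)).det ≠ 0 := by
    rw [det_mul, det_diagonal]
    exact mul_ne_zero (Finset.prod_ne_zero_iff.mpr fun i _ => hc (e i))
      (det_vandermonde_ne_zero_iff.mpr (hz.comp e.injective))
  calc n = (diagonal (c ∘ e) * vandermonde (z ∘ e)).rank := by
        rw [rank_of_det_ne_zero hdet, Fintype.card_fin]
    _ ≤ A.rank := hsub ▸ rank_submatrix_le A e id

theorem equivalent_channel_rank_general
    (N G : ℕ) (Δf fc : ℝ) (hΔf : 0 < Δf)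
    (hG : 2 * N ≤ G)
    (t : Fin G → ℝ) (ht : Function.Injective t)
    (hspread : ∀ v w : Fin G, t v - t w < 1 / Δf)
    (H : Fin (2 * N) → ℂ) (hH : ∀ n, H n ≠ 0) :
    Matrix.rank
      ((Matrix.of fun (v : Fin G) (n : Fin (2 * N)) =>
        Complex.exp (2 * Real.pi * Complex.I *
          ((fc + (((n : ℕ) : ℝ) + 1 - (N : ℝ)) * Δf : ℝ) : ℂ) * ((t v : ℝ) : ℂ)))
        * Matrix.diagonal H) = 2 * N := by
  set c : Fin G → ℂ := fun v => exp (2 * Real.pi * I * ((fc + (1 - N) * Δf : ℝ) : ℂ) * t v)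
  set z : Fin G → ℂ := fun v => exp (2 * Real.pi * I * ((Δf * t v : ℝ) : ℂ))
  have hphase : ∀ v w, Δf * t v - Δf * t w < 1 := fun v w => by
    have := hspread v w
    rwa [lt_div_iff₀ hΔf, mul_comm, mul_sub] at this
  have hz : Function.Injective z := fun v w hvw =>
    ht <| mul_left_cancel₀ hΔf.ne' <| Complex.eq_of_exp_two_pi_mul_I_mul_eq
      (abs_sub_lt_iff.mpr ⟨hphase v w, hphase w v⟩) hvw
  have hV : (Matrix.of fun (v : Fin G) (n : Fin (2 * N)) =>
      exp (2 * Real.pi * I * ((fc + (((n : ℕ) : ℝ) + 1 - (N : ℝ)) * Δf : ℝ) : ℂ) * t v)) =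
      Matrix.of fun v (n : Fin (2 * N)) => c v * z v ^ (n : ℕ) := by
    ext v n
    simp only [Matrix.of_apply, c, z, ← exp_nat_mul, ← exp_add]
    congr 1
    push_cast
    ring
  have hHdet : (Matrix.diagonal H).det ≠ 0 := by
    simpa [Matrix.det_diagonal, Finset.prod_ne_zero_iff] using hH
  rw [hV, Matrix.rank_mul_eq_left_of_det_ne_zero _ _ hHdet,
    Matrix.rank_of_mul_pow (by simpa using hG) c z (fun _ => exp_ne_zero _) hz]

/-- Theorem 2 of the paper: the equivalent channel matrix `V · H`, where `V` is
the sampling matrix and `H` the diagonal frequency-domain channel matrix with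
nonzero subchannel gains, has full rank `2N`. -/
theorem equivalent_channel_rank
    (N G : ℕ) (hN : 1 ≤ N) (Δf fc : ℝ) (hΔf : 0 < Δf)
    (hG : 2 * N ≤ G)
    (t : Fin G → ℝ) (ht : Function.Injective t)
    (hspread : ∀ v w : Fin G, t v - t w < 1 / Δf)
    (H : Fin (2 * N) → ℂ) (hH : ∀ n, H n ≠ 0) :
    Matrix.rank
      ((Matrix.of fun (v : Fin G) (n : Fin (2 * N)) =>
        Complex.exp (2 * Real.pi * Complex.I *
          ((fc + (((n : ℕ) : ℝ) + 1 - (N : ℝ)) * Δf : ℝ) : ℂ) * ((t v : ℝ) : ℂ)))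
        * Matrix.diagonal H) = 2 * N :=
  equivalent_channel_rank_general N G Δf fc hΔf hG t ht hspread H hH
end

section
/- Let N ≥ 1, let Δf > 0 and f_c be real numbers, and set f_n = f_c + nΔf for n ∈ {−N+1, …, N}. Let G ≥ 2N and let t₁, …, t_G be pairwise distinct real numbers satisfying max_v t_v − min_v t_v < 1/Δf. Let V be the G × 2N complex matrix with entries V[v, n] = exp(2πi f_n t_v), and let H be the 2N × 2N diagonal complex matrix with nonzero diagonal entries H^{−N+1}, …, H^{N}. Then the 2N × 2N Hermitian matrix (V·H)ᴴ(V·H) is positive definite. -/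
open Complex Matrix Polynomial
open scoped ComplexOrder

/-- The Gram matrix `(V·H)ᴴ (V·H)` of the equivalent channel matrix is positive
definite, so all `2N` singular values of `V·H` are strictly positive. -/
theorem equivalent_channel_gram_posDef
    (N G : ℕ) (hN : 1 ≤ N) (Δf fc : ℝ) (hΔf : 0 < Δf)
    (hG : 2 * N ≤ G)
    (t : Fin G → ℝ) (ht : Function.Injective t)
    (hspread : ∀ v w : Fin G, t v - t w < 1 / Δf)
    (H : Fin (2 * N) → ℂ) (hH : ∀ n, H n ≠ 0) :
    Matrix.PosDef
      ((((Matrix.of fun (v : Fin G) (n : Fin (2 * N)) =>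
          Complex.exp (2 * Real.pi * Complex.I *
            ((fc + (((n : ℕ) : ℝ) + 1 - (N : ℝ)) * Δf : ℝ) : ℂ) * ((t v : ℝ) : ℂ)))
          * Matrix.diagonal H)ᴴ) *
        ((Matrix.of fun (v : Fin G) (n : Fin (2 * N)) =>
          Complex.exp (2 * Real.pi * Complex.I *
            ((fc + (((n : ℕ) : ℝ) + 1 - (N : ℝ)) * Δf : ℝ) : ℂ) * ((t v : ℝ) : ℂ)))
          * Matrix.diagonal H)) := by
  classical
  set V : Matrix (Fin G) (Fin (2 * N)) ℂ :=
    Matrix.of fun (v : Fin G) (n : Fin (2 * N)) =>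
      Complex.exp (2 * Real.pi * Complex.I *
        ((fc + (((n : ℕ) : ℝ) + 1 - (N : ℝ)) * Δf : ℝ) : ℂ) * ((t v : ℝ) : ℂ)) with hV
  set A : Matrix (Fin G) (Fin (2 * N)) ℂ := V * Matrix.diagonal H with hA
  -- key: A has trivial kernel
  have key : ∀ x : Fin (2 * N) → ℂ, A *ᵥ x = 0 → x = 0 := by
    intro x hx
    set y : Fin (2 * N) → ℂ := fun n => H n * x n with hy
    have hVy : V *ᵥ y = 0 := by
      rw [hA, ← Matrix.mulVec_mulVec] at hx
      have hd : Matrix.diagonal H *ᵥ x = y := by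
        funext n
        simp [hy, Matrix.mulVec_diagonal]
      rw [hd] at hx
      exact hx
    -- the points
    set z : Fin G → ℂ := fun v => Complex.exp (2 * Real.pi * Complex.I * Δf * t v) with hz
    have hzinj : Function.Injective z := by
      intro v w hvw
      rw [hz] at hvw
      rw [Complex.exp_eq_exp_iff_exists_int] at hvw
      obtain ⟨k, hk⟩ := hvw
      have h3 : (2 * (Real.pi : ℂ) * Complex.I) ≠ 0 := by
        simp [Real.pi_ne_zero, Complex.I_ne_zero]
      have h2 : ((Δf : ℂ) * t v) = ((Δf : ℂ) * t w + k) :=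
        mul_left_cancel₀ h3 (by linear_combination hk)
      have h4 : ((Δf * (t v - t w) : ℝ) : ℂ) = (k : ℂ) := by
        push_cast
        linear_combination h2
      have h4' : Δf * (t v - t w) = (k : ℝ) := by exact_mod_cast h4
      have hone : Δf * (1 / Δf) = 1 := by field_simp
      have h5 : |Δf * (t v - t w)| < 1 := by
        rw [abs_lt]
        constructor
        · have := mul_lt_mul_of_pos_left (hspread w v) hΔf
          nlinarith
        · have := mul_lt_mul_of_pos_left (hspread v w) hΔf
          nlinarith
      have hk0 : k = 0 := by
        rw [h4'] at h5
        have h7 : -1 < k ∧ k < 1 := abs_lt.mp (by exact_mod_cast h5)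
        omega
      have : t v = t w := by
        have h6 : Δf * (t v - t w) = 0 := by rw [h4', hk0]; simp
        rcases mul_eq_zero.mp h6 with h | h
        · exact absurd h (ne_of_gt hΔf)
        · linarith [sub_eq_zero.mp h]
      exact ht this
    -- the polynomial
    set p : ℂ[X] := ∑ n : Fin (2 * N), Polynomial.C (y n) * Polynomial.X ^ (n : ℕ) with hp
    have heval : ∀ v : Fin G, p.eval (z v) = 0 := by
      intro v
      have hv := congrFun hVy v
      simp only [Matrix.mulVec, dotProduct, Pi.zero_apply] at hv
      set a : ℂ := 2 * Real.pi * Complex.I * Δf * t v with ha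
      set b : ℂ := 2 * Real.pi * Complex.I * fc * t v with hb
      have hterm : ∀ n : Fin (2 * N),
          V v n = Complex.exp (b + (1 - (N : ℂ)) * a) * (z v) ^ (n : ℕ) := by
        intro n
        have harg : 2 * Real.pi * Complex.I *
            ((fc + (((n : ℕ) : ℝ) + 1 - (N : ℝ)) * Δf : ℝ) : ℂ) * ((t v : ℝ) : ℂ)
            = (b + (1 - (N : ℂ)) * a) + (n : ℕ) * a := by
          rw [ha, hb]
          push_cast
          ring
        rw [hV]
        show Complex.exp _ = _
        rw [harg, Complex.exp_add, Complex.exp_nat_mul]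
      have : (∑ n : Fin (2 * N), V v n * y n)
          = Complex.exp (b + (1 - (N : ℂ)) * a) * p.eval (z v) := by
        rw [hp]
        simp only [Polynomial.eval_finset_sum, Polynomial.eval_mul, Polynomial.eval_C,
          Polynomial.eval_pow, Polynomial.eval_X, Finset.mul_sum]
        refine Finset.sum_congr rfl fun n _ => ?_
        rw [hterm n]; ring
      rw [this] at hv
      rcases mul_eq_zero.mp hv with h | h
      · exact absurd h (Complex.exp_ne_zero _)
      · exact h
    have hdeg : p.natDegree < Fintype.card (Fin G) := by
      rw [Fintype.card_fin]
      have h1 : p.natDegree ≤ 2 * N - 1 := by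
        refine Polynomial.natDegree_sum_le_of_forall_le _ _ fun n _ => ?_
        exact (Polynomial.natDegree_C_mul_X_pow_le _ _).trans
          (Nat.le_sub_one_of_lt n.isLt)
      omega
    have hp0 : p = 0 := Polynomial.eq_zero_of_natDegree_lt_card_of_eval_eq_zero p hzinj heval hdeg
    have hy0 : ∀ n, y n = 0 := by
      intro n
      have := congrArg (fun q => q.coeff (n : ℕ)) hp0
      simpa [hp, Polynomial.finset_sum_coeff, Polynomial.coeff_C_mul,
        Polynomial.coeff_X_pow, Fin.val_inj, eq_comm] using this
    funext n
    have := hy0 n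
    rw [hy] at this
    exact (mul_eq_zero.mp this).resolve_left (hH n)
  -- conclude positive definiteness
  refine Matrix.PosDef.of_dotProduct_mulVec_pos (Matrix.isHermitian_conjTranspose_mul_self A) fun x hx => ?_
  have hps := Matrix.posSemidef_conjTranspose_mul_self A
  have hne : star x ⬝ᵥ (Aᴴ * A) *ᵥ x ≠ 0 := by
    intro h0
    rw [hps.dotProduct_mulVec_zero_iff] at h0
    -- AᴴA x = 0 implies A x = 0
    have hAx : A *ᵥ x = 0 := by
      have h1 : star x ⬝ᵥ (Aᴴ * A) *ᵥ x = 0 := by rw [h0, dotProduct_zero]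
      rw [← Matrix.mulVec_mulVec, Matrix.dotProduct_mulVec, Matrix.vecMul_conjTranspose,
        star_star, dotProduct_star_self_eq_zero] at h1
      exact h1
    exact hx (key x hAx)
  exact lt_of_le_of_ne (hps.dotProduct_mulVec_nonneg x) (Ne.symm hne)
end

section
/- Let T_S > 0 and T_Z be real numbers with 0 < T_Z ≤ T_S. Let x : ℝ → ℂ satisfy x(t) = 0 for every t not belonging to ⋃_{k ∈ ℤ} [k·T_S, (k+1)·T_S − T_Z]. Let a₁, …, a_L be complex numbers and τ₁, …, τ_L real numbers, with τ_min = min_l τ_l and τ_max = max_l τ_l satisfying τ_max − τ_min < T_Z. Define y(t) = Σ_{l=1}^{L} a_l · x(t − τ_l). Then for every integer m and every t in the open interval ((m+1)·T_S − T_Z + τ_max, (m+1)·T_S + τ_min), we have y(t) = 0. -/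
open Finset Set

theorem eq_zero_of_mem_zeroInterval {M : Type*} [Zero M] {T Z : ℝ} (hT : 0 ≤ T) {x : ℝ → M}
    (hx : ∀ t : ℝ, (¬ ∃ k : ℤ, k * T ≤ t ∧ t ≤ (k + 1) * T - Z) → x t = 0)
    (m : ℤ) {s : ℝ} (hs : s ∈ Ioo ((m + 1) * T - Z) ((m + 1) * T)) : x s = 0 := by
  refine hx s ?_
  rintro ⟨k, hks, hsk⟩
  obtain ⟨hs_lo, hs_hi⟩ := hs
  rcases le_or_gt k m with hkm | hmk
  · have : ((k : ℝ) + 1) * T ≤ (m + 1) * T := by gcongr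
    linarith
  · have : ((m : ℝ) + 1) * T ≤ k * T := by gcongr; exact_mod_cast hmk
    linarith

theorem si_free_interval_U1_general
    (TS TZ : ℝ) (hTS : 0 < TS)
    (x : ℝ → ℂ)
    (hx : ∀ t : ℝ, (¬ ∃ k : ℤ, k * TS ≤ t ∧ t ≤ (k + 1) * TS - TZ) → x t = 0)
    (L : ℕ) (hL : 0 < L) (a : Fin L → ℂ) (τ : Fin L → ℝ) :
    ∀ m : ℤ, ∀ t : ℝ,
      (m + 1) * TS - TZ + (Finset.univ.sup' (Finset.univ_nonempty_iff.mpr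
        (Fin.pos_iff_nonempty.mp hL)) τ) < t →
      t < (m + 1) * TS + (Finset.univ.inf' (Finset.univ_nonempty_iff.mpr
        (Fin.pos_iff_nonempty.mp hL)) τ) →
      (∑ l : Fin L, a l * x (t - τ l)) = 0 := by
  intro m t ht_lo ht_hi
  refine sum_eq_zero fun l _ => ?_
  have hτ_le_max := le_sup' τ (mem_univ l)
  have hmin_le_τ := inf'_le τ (mem_univ l)
  rw [eq_zero_of_mem_zeroInterval hTS.le hx m ⟨by linarith, by linarith⟩, mul_zero]

/-- Equation (9) of the paper: the transmit signal of `U₁` vanishes outside the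
intervals `[k·T_S, (k+1)·T_S − T_Z]`, and if the zero-interval exceeds the delay
spread, the multipath channel output vanishes on each SI-free interval
`((m+1)·T_S − T_Z + τ_max, (m+1)·T_S + τ_min)`. -/
theorem si_free_interval_U1
    (TS TZ : ℝ) (hTS : 0 < TS) (hTZ : 0 < TZ) (hTZS : TZ ≤ TS)
    (x : ℝ → ℂ)
    (hx : ∀ t : ℝ, (¬ ∃ k : ℤ, k * TS ≤ t ∧ t ≤ (k + 1) * TS - TZ) → x t = 0)
    (L : ℕ) (hL : 0 < L) (a : Fin L → ℂ) (τ : Fin L → ℝ)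
    (hspread : (Finset.univ.sup' (Finset.univ_nonempty_iff.mpr
        (Fin.pos_iff_nonempty.mp hL)) τ) -
      (Finset.univ.inf' (Finset.univ_nonempty_iff.mpr
        (Fin.pos_iff_nonempty.mp hL)) τ) < TZ) :
    ∀ m : ℤ, ∀ t : ℝ,
      (m + 1) * TS - TZ + (Finset.univ.sup' (Finset.univ_nonempty_iff.mpr
        (Fin.pos_iff_nonempty.mp hL)) τ) < t →
      t < (m + 1) * TS + (Finset.univ.inf' (Finset.univ_nonempty_iff.mpr
        (Fin.pos_iff_nonempty.mp hL)) τ) →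
      (∑ l : Fin L, a l * x (t - τ l)) = 0 :=
  si_free_interval_U1_general TS TZ hTS x hx L hL a τ
end

section
/- Let T_S > 0 and T_Z be real numbers with 0 < T_Z ≤ T_S. Let x : ℝ → ℂ satisfy x(t) = 0 for every t not belonging to ⋃_{k ∈ ℤ} [k·T_S + T_Z, (k+1)·T_S]. Let a₁, …, a_L be complex numbers and τ₁, …, τ_L real numbers, with τ_min = min_l τ_l and τ_max = max_l τ_l satisfying τ_max − τ_min < T_Z. Define y(t) = Σ_{l=1}^{L} a_l · x(t − τ_l). Then for every integer m and every t in the open interval (m·T_S + τ_max, m·T_S + T_Z + τ_min), we have y(t) = 0. -/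
open Set

lemma not_exists_data_interval_of_mem_Ioo {TS TZ s : ℝ} (hTS : 0 ≤ TS) {m : ℤ}
    (hs : s ∈ Ioo (m * TS) (m * TS + TZ)) :
    ¬ ∃ k : ℤ, k * TS + TZ ≤ s ∧ s ≤ (k + 1) * TS := by
  rintro ⟨k, hk_start, hk_end⟩
  rcases lt_or_ge k m with hkm | hmk
  · have hk : ((k : ℝ) + 1) * TS ≤ m * TS :=
      mul_le_mul_of_nonneg_right (by exact_mod_cast Int.add_one_le_of_lt hkm) hTS
    linarith [hs.1]
  · have hk : (m : ℝ) * TS ≤ k * TS := mul_le_mul_of_nonneg_right (by exact_mod_cast hmk) hTS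
    linarith [hs.2]

lemma sub_mem_Ioo_of_mem_Ioo_of_mem_Icc {a b c d τ t : ℝ} (hτ : τ ∈ Icc c d)
    (ht : t ∈ Ioo (a + d) (b + c)) : t - τ ∈ Ioo a b :=
  ⟨by linarith [ht.1, hτ.2], by linarith [ht.2, hτ.1]⟩

theorem si_free_interval_U2_general
    (TS TZ : ℝ) (hTS : 0 < TS)
    (x : ℝ → ℂ)
    (hx : ∀ t : ℝ, (¬ ∃ k : ℤ, k * TS + TZ ≤ t ∧ t ≤ (k + 1) * TS) → x t = 0)
    (L : ℕ) (hL : 0 < L) (a : Fin L → ℂ) (τ : Fin L → ℝ) :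
    ∀ m : ℤ, ∀ t : ℝ,
      m * TS + (Finset.univ.sup' (Finset.univ_nonempty_iff.mpr
        (Fin.pos_iff_nonempty.mp hL)) τ) < t →
      t < m * TS + TZ + (Finset.univ.inf' (Finset.univ_nonempty_iff.mpr
        (Fin.pos_iff_nonempty.mp hL)) τ) →
      (∑ l : Fin L, a l * x (t - τ l)) = 0 := by
  intro m t h_after_max h_before_min
  refine Finset.sum_eq_zero fun l _ => ?_
  have hτ : τ l ∈ Icc (Finset.univ.inf' _ τ) (Finset.univ.sup' _ τ) :=
    ⟨Finset.inf'_le τ (Finset.mem_univ l), Finset.le_sup' τ (Finset.mem_univ l)⟩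
  have h_zero_interval : t - τ l ∈ Ioo (m * TS) (m * TS + TZ) :=
    sub_mem_Ioo_of_mem_Ioo_of_mem_Icc hτ ⟨h_after_max, h_before_min⟩
  rw [hx _ (not_exists_data_interval_of_mem_Ioo hTS.le h_zero_interval), mul_zero]

/-- Equation (10) of the paper: the transmit signal of `U₂` vanishes outside the
intervals `[k·T_S + T_Z, (k+1)·T_S]`, and if the zero-interval exceeds the delay
spread, the multipath channel output vanishes on each SI-free interval
`(m·T_S + τ_max, m·T_S + T_Z + τ_min)`. -/
theorem si_free_interval_U2
    (TS TZ : ℝ) (hTS : 0 < TS) (hTZ : 0 < TZ) (hTZS : TZ ≤ TS)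
    (x : ℝ → ℂ)
    (hx : ∀ t : ℝ, (¬ ∃ k : ℤ, k * TS + TZ ≤ t ∧ t ≤ (k + 1) * TS) → x t = 0)
    (L : ℕ) (hL : 0 < L) (a : Fin L → ℂ) (τ : Fin L → ℝ)
    (hspread : (Finset.univ.sup' (Finset.univ_nonempty_iff.mpr
        (Fin.pos_iff_nonempty.mp hL)) τ) -
      (Finset.univ.inf' (Finset.univ_nonempty_iff.mpr
        (Fin.pos_iff_nonempty.mp hL)) τ) < TZ) :
    ∀ m : ℤ, ∀ t : ℝ,
      m * TS + (Finset.univ.sup' (Finset.univ_nonempty_iff.mpr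
        (Fin.pos_iff_nonempty.mp hL)) τ) < t →
      t < m * TS + TZ + (Finset.univ.inf' (Finset.univ_nonempty_iff.mpr
        (Fin.pos_iff_nonempty.mp hL)) τ) →
      (∑ l : Fin L, a l * x (t - τ l)) = 0 :=
  si_free_interval_U2_general TS TZ hTS x hx L hL a τ
end
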